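/- arXiv:0709.3921 — 2 statements merged into one kernel-verified Lean document; each statement's English description precedes it below -/
import Mathlib

section
/- Let q ∈ ℝⁿ be a probability vector, let μ, ν ≥ 0, and suppose q_v ≤ (1 + μ)/n for all v and |{v : q_v < 1/n}| ≤ ν·n, and additionally q_v ≥ 0. Then the squared Euclidean norm satisfies ‖q - (1/n)𝟙‖₂² ≤ (ν + μ²)/n; hence if ν + μ² ≤ ε², then ‖q - (1/n)𝟙‖₂ ≤ ε/√n. -/
/-! A coordinate below `1/n` lies within `1/n` of `1/n` because `q ≥ 0`, and there are at most
`νn` of them; every other coordinate lies within `μ/n` of `1/n`. Summing squares gives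
`νn · (1/n)² + n · (μ/n)² = (ν + μ²)/n`. -/

open Finset

theorem sum_sq_sub_le_card_lt_mul_add_card_mul {ι : Type*} [Fintype ι] (q : ι → ℝ) (a b : ℝ)
    (hq : ∀ i, 0 ≤ q i) (hover : ∀ i, q i ≤ a + b) :
    ∑ i, (q i - a) ^ 2 ≤ #{i | q i < a} * a ^ 2 + Fintype.card ι * b ^ 2 := by
  have hlow : ∀ i ∈ ({i | q i < a} : Finset ι), (q i - a) ^ 2 ≤ a ^ 2 := fun i hi => by
    have := (mem_filter.mp hi).2
    nlinarith [hq i]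
  have hhigh : ∀ i ∈ ({i | ¬q i < a} : Finset ι), (q i - a) ^ 2 ≤ b ^ 2 := fun i hi => by
    have hge : a ≤ q i := not_lt.mp (mem_filter.mp hi).2
    exact pow_le_pow_left₀ (sub_nonneg.mpr hge) (by linarith [hover i]) 2
  rw [← sum_filter_add_sum_filter_not univ (fun i => q i < a)]
  gcongr
  · simpa using sum_le_card_nsmul _ _ _ hlow
  · calc ∑ i ∈ {i | ¬q i < a}, (q i - a) ^ 2
        ≤ #{i | ¬q i < a} * b ^ 2 := by simpa using sum_le_card_nsmul _ _ _ hhigh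
      _ ≤ Fintype.card ι * b ^ 2 := by gcongr; exact_mod_cast card_le_univ _

theorem Real.sqrt_le_div_sqrt_of_le_sq_div {s ε n : ℝ} (hε : 0 ≤ ε) (h : s ≤ ε ^ 2 / n) :
    √s ≤ ε / √n := by
  calc √s ≤ √(ε ^ 2 / n) := Real.sqrt_le_sqrt h
    _ = ε / √n := by rw [Real.sqrt_div (sq_nonneg ε), Real.sqrt_sq hε]

theorem l2_bound_of_rejection_sampling_general (n : ℕ) (q : Fin n → ℝ)
    (hq : ∀ v, 0 ≤ q v)
    (μ ν : ℝ)
    (hover : ∀ v, q v ≤ (1 + μ)/n)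
    (hunder : ((Finset.univ.filter (fun v => q v < 1/(n:ℝ))).card : ℝ) ≤ ν * n) :
    (∑ v, (q v - 1/(n:ℝ))^2 ≤ (ν + μ^2)/n) ∧
    (∀ ε : ℝ, 0 ≤ ε → ν + μ^2 ≤ ε^2 →
      Real.sqrt (∑ v, (q v - 1/(n:ℝ))^2) ≤ ε / Real.sqrt n) := by
  have key : ∑ v, (q v - 1/(n:ℝ))^2 ≤ (ν + μ^2)/n :=
    calc ∑ v, (q v - 1/(n:ℝ))^2
        ≤ #{v | q v < 1/(n:ℝ)} * (1/(n:ℝ))^2 + n * (μ/n)^2 := by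
          simpa using sum_sq_sub_le_card_lt_mul_add_card_mul q (1/(n:ℝ)) (μ/n) hq
            (fun v => by rw [← add_div]; exact hover v)
      _ ≤ ν * n * (1/(n:ℝ))^2 + n * (μ/n)^2 := by gcongr
      _ = (ν + μ^2)/n := by
          rcases eq_or_ne (n:ℝ) 0 with h | h
          · simp [h]
          · field_simp
  exact ⟨key, fun ε hε hεsq => Real.sqrt_le_div_sqrt_of_le_sq_div hε
    (key.trans (div_le_div_of_nonneg_right hεsq n.cast_nonneg))⟩

/-- Under the rejection-sampling bounds, the squared Euclidean distance of `q` from the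
uniform vector satisfies `‖q - (1/n)𝟙‖₂² ≤ (ν + μ²)/n`; hence if `ν + μ² ≤ ε²` then
`‖q - (1/n)𝟙‖₂ ≤ ε/√n`. -/
theorem l2_bound_of_rejection_sampling (n : ℕ) (q : Fin n → ℝ)
    (hq : ∀ v, 0 ≤ q v) (hsum : ∑ v, q v = 1)
    (μ ν : ℝ) (hμ : 0 ≤ μ) (hν : 0 ≤ ν)
    (hover : ∀ v, q v ≤ (1 + μ)/n)
    (hunder : ((Finset.univ.filter (fun v => q v < 1/(n:ℝ))).card : ℝ) ≤ ν * n) :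
    (∑ v, (q v - 1/(n:ℝ))^2 ≤ (ν + μ^2)/n) ∧
    (∀ ε : ℝ, 0 ≤ ε → ν + μ^2 ≤ ε^2 →
      Real.sqrt (∑ v, (q v - 1/(n:ℝ))^2) ≤ ε / Real.sqrt n) :=
  l2_bound_of_rejection_sampling_general n q hq μ ν hover hunder
end

section
/- Let q ∈ ℝⁿ be a probability vector with ‖q - (1/n)𝟙‖₂ ≤ ε/√n for some ε ∈ (0, 1/4), and let W = I - (1/(2n))·diag(𝟙 + n q) + (1/(2n))·(𝟙qᵀ + q𝟙ᵀ). Then the second largest eigenvalue of W satisfies λ₂(W) ≤ 1 - 1/(2n) + ε/n ≤ 1 - 1/(4n). -/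
/-!
For `v ⟂ 𝟙` the rank-two part `𝟙qᵀ + q𝟙ᵀ` of the gossip matrix contributes nothing to the
quadratic form `vᵀWv`, while the diagonal part `(1/(2n)) diag(𝟙 + nq)` dominates
`(1/(2n)) I` because `q ≥ 0`. Hence the Rayleigh quotient of `W` on `𝟙^⟂`, and with it every
eigenvalue there, is at most `1 - 1/(2n)`; the slack `ε/n` and `ε < 1/4` give the rest.
-/

open Matrix

variable {ι R : Type*} [Fintype ι]

theorem Matrix.le_of_mulVec_eq_smul_of_dotProduct_mulVec_le [Field R] [LinearOrder R]
    [IsStrictOrderedRing R] {A : Matrix ι ι R} {v : ι → R} {μ c : R} (hv : v ≠ 0)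
    (hAv : A *ᵥ v = μ • v) (hA : v ⬝ᵥ (A *ᵥ v) ≤ c * (v ⬝ᵥ v)) : μ ≤ c := by
  have hpos : 0 < v ⬝ᵥ v :=
    lt_of_le_of_ne (Finset.sum_nonneg fun i _ => mul_self_nonneg (v i))
      (Ne.symm (dotProduct_self_eq_zero.not.mpr hv))
  rw [hAv, dotProduct_smul, smul_eq_mul] at hA
  exact le_of_mul_le_mul_right hA hpos

theorem Matrix.dotProduct_of_add_mulVec [CommSemiring R] (q v : ι → R) :
    v ⬝ᵥ (of (fun i j => q j + q i) *ᵥ v) = 2 * (q ⬝ᵥ v) * ∑ i, v i := by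
  have hrow : of (fun i j => q j + q i) *ᵥ v = (q ⬝ᵥ v) • 1 + (∑ j, v j) • q := by
    ext i
    simp only [mulVec, dotProduct, of_apply, Pi.add_apply, Pi.smul_apply, Pi.one_apply,
      smul_eq_mul, mul_one, add_mul, Finset.sum_add_distrib, ← Finset.mul_sum]
    ring
  rw [hrow, dotProduct_add, dotProduct_smul, dotProduct_smul, dotProduct_one, dotProduct_comm v q,
    smul_eq_mul, smul_eq_mul]
  ring

theorem Matrix.dotProduct_self_le_dotProduct_diagonal_mulVec [CommRing R] [LinearOrder R]
    [IsStrictOrderedRing R] [DecidableEq ι] {d : ι → R} (hd : ∀ i, 1 ≤ d i) (v : ι → R) :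
    v ⬝ᵥ v ≤ v ⬝ᵥ (diagonal d *ᵥ v) := by
  refine Finset.sum_le_sum fun i _ => ?_
  rw [mulVec_diagonal]
  nlinarith [hd i, mul_self_nonneg (v i)]

noncomputable def gossipMatrix (n : ℕ) (q : Fin n → ℝ) : Matrix (Fin n) (Fin n) ℝ :=
  1 - (2 * (n : ℝ))⁻¹ • diagonal (fun i => 1 + n * q i)
    + (2 * (n : ℝ))⁻¹ • of (fun i j => q j + q i)

section gossipMatrix

variable {n : ℕ} {q v : Fin n → ℝ}

theorem dotProduct_gossipMatrix_mulVec_le (hq : ∀ i, 0 ≤ q i) (hv : ∑ i, v i = 0) :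
    v ⬝ᵥ (gossipMatrix n q *ᵥ v) ≤ (1 - (2 * (n : ℝ))⁻¹) * (v ⬝ᵥ v) := by
  have hdiag : v ⬝ᵥ v ≤ v ⬝ᵥ (diagonal (fun i => 1 + n * q i) *ᵥ v) :=
    dotProduct_self_le_dotProduct_diagonal_mulVec
      (fun i => le_add_of_nonneg_right (mul_nonneg n.cast_nonneg (hq i))) v
  have hc : 0 ≤ (2 * (n : ℝ))⁻¹ := by positivity
  rw [gossipMatrix, add_mulVec, sub_mulVec, smul_mulVec, smul_mulVec, one_mulVec,
    dotProduct_add, dotProduct_sub, dotProduct_smul, dotProduct_smul, smul_eq_mul, smul_eq_mul,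
    dotProduct_of_add_mulVec, hv]
  nlinarith [mul_le_mul_of_nonneg_left hdiag hc]

theorem le_of_gossipMatrix_mulVec_eq_smul (hq : ∀ i, 0 ≤ q i) {μ : ℝ} (hv : v ≠ 0)
    (hv0 : ∑ i, v i = 0) (hμ : gossipMatrix n q *ᵥ v = μ • v) : μ ≤ 1 - (2 * (n : ℝ))⁻¹ :=
  le_of_mulVec_eq_smul_of_dotProduct_mulVec_le hv hμ (dotProduct_gossipMatrix_mulVec_le hq hv0)

end gossipMatrix

theorem gossip_matrix_second_eigenvalue_bound_general (n : ℕ) (q : Fin n → ℝ)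
    (hq : ∀ v, 0 ≤ q v)
    (ε : ℝ) (hε0 : 0 < ε) (hε : ε < 1/4)
    (W : Matrix (Fin n) (Fin n) ℝ)
    (hW : W = (1 : Matrix (Fin n) (Fin n) ℝ)
        - (2*(n:ℝ))⁻¹ • Matrix.diagonal (fun i => 1 + n * q i)
        + (2*(n:ℝ))⁻¹ • Matrix.of (fun i j => q j + q i)) :
    (∀ (μ : ℝ) (v : Fin n → ℝ), v ≠ 0 → (∑ i, v i) = 0 → W.mulVec v = μ • v →
      μ ≤ 1 - 1/(2*(n:ℝ)) + ε/n) ∧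
    1 - 1/(2*(n:ℝ)) + ε/n ≤ 1 - 1/(4*(n:ℝ)) := by
  have hεn : ε / n ≤ 1 / (4 * n) := by
    rw [div_mul_eq_div_div]
    exact div_le_div_of_nonneg_right (by linarith) n.cast_nonneg
  refine ⟨fun μ v hv hv0 hμ => ?_, ?_⟩
  · have hμ' := le_of_gossipMatrix_mulVec_eq_smul hq hv hv0 (hW ▸ hμ)
    have : 0 ≤ ε / n := by positivity
    rw [one_div]
    linarith
  · have : 1 / (2 * (n : ℝ)) = 2 * (1 / (4 * n)) := by ring
    linarith

/-- If `q` is a probability vector with `‖q - (1/n)𝟙‖₂ ≤ ε/√n`, `ε ∈ (0, 1/4)`, then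
every eigenvalue of the gossip matrix `W` on the subspace orthogonal to `𝟙` (i.e. every
eigenvalue with an eigenvector summing to zero) is at most `1 - 1/(2n) + ε/n ≤ 1 - 1/(4n)`;
in particular the second largest eigenvalue of `W` satisfies these bounds. -/
theorem gossip_matrix_second_eigenvalue_bound (n : ℕ) (hn : 0 < n) (q : Fin n → ℝ)
    (hq : ∀ v, 0 ≤ q v) (hsum : ∑ v, q v = 1)
    (ε : ℝ) (hε0 : 0 < ε) (hε : ε < 1/4)
    (hnear : Real.sqrt (∑ v, (q v - 1/(n:ℝ))^2) ≤ ε / Real.sqrt n)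
    (W : Matrix (Fin n) (Fin n) ℝ)
    (hW : W = (1 : Matrix (Fin n) (Fin n) ℝ)
        - (2*(n:ℝ))⁻¹ • Matrix.diagonal (fun i => 1 + n * q i)
        + (2*(n:ℝ))⁻¹ • Matrix.of (fun i j => q j + q i)) :
    (∀ (μ : ℝ) (v : Fin n → ℝ), v ≠ 0 → (∑ i, v i) = 0 → W.mulVec v = μ • v →
      μ ≤ 1 - 1/(2*(n:ℝ)) + ε/n) ∧
    1 - 1/(2*(n:ℝ)) + ε/n ≤ 1 - 1/(4*(n:ℝ)) :=
  gossip_matrix_second_eigenvalue_bound_general n q hq ε hε0 hε W hW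
end
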